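/- Let m ≥ 2 and let (v₁,v₂) = (1/a,1/a) with a uniform on {1,...,m}. Consider the 2-supply mechanism that offers p₁ to buyer 1, then offers p₂ to buyer 2 if buyer 1 rejected and p₂' if buyer 1 accepted. Its expected revenue is at most 4/m, whereas the expected optimal revenue of a dominant-strategy IC, ex-post IR mechanism is 2·H_m/m (charging each buyer the other's reported value). Hence the revenue ratio is at most 2/H_m. -/
import Mathlib

lemma price_sum_le_one (m : ℕ) (p : ℝ) (hp : 0 < p) :
    ∑ a ∈ Finset.Icc 1 m, (if p ≤ 1 / (a : ℝ) then p else 0) ≤ 1 := by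
  classical
  have key : ∑ a ∈ Finset.Icc 1 m, (if p ≤ 1 / (a : ℝ) then p else 0)
      = (((Finset.Icc 1 m).filter (fun a : ℕ => p ≤ 1 / (a : ℝ))).card : ℝ) * p := by
    rw [Finset.sum_ite, Finset.sum_const, Finset.sum_const_zero, add_zero, nsmul_eq_mul]
  rw [key]
  have hsub : (Finset.Icc 1 m).filter (fun a : ℕ => p ≤ 1 / (a : ℝ)) ⊆
      Finset.Icc 1 (Nat.floor (1 / p)) := by
    intro a ha
    simp only [Finset.mem_filter, Finset.mem_Icc] at ha ⊢
    obtain ⟨⟨h1, _⟩, hpa⟩ := ha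
    refine ⟨h1, Nat.le_floor ?_⟩
    have hapos : (0 : ℝ) < (a : ℝ) := by positivity
    rw [le_div_iff₀ hapos] at hpa
    rw [le_div_iff₀ hp]
    linarith
  have hcard := Finset.card_le_card hsub
  have hcard' : ((Finset.Icc 1 m).filter (fun a : ℕ => p ≤ 1 / (a : ℝ))).card ≤ Nat.floor (1 / p) := by
    simpa using hcard
  calc (((Finset.Icc 1 m).filter (fun a : ℕ => p ≤ 1 / (a : ℝ))).card : ℝ) * p
      ≤ (Nat.floor (1 / p) : ℝ) * p := by
        apply mul_le_mul_of_nonneg_right _ hp.le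
        exact_mod_cast hcard'
    _ ≤ (1 / p) * p := by
        apply mul_le_mul_of_nonneg_right (Nat.floor_le (by positivity)) hp.le
    _ = 1 := by field_simp

/-- Two perfectly correlated buyers, 2-limited supply.  The mechanism offers p₁ to buyer 1,
then p₂' to buyer 2 if buyer 1 accepted and p₂ otherwise.  Its expected revenue is at most
4/m, the optimal DSIC ex-post IR revenue is 2·H_m/m, hence the ratio is at most 2/H_m. -/
theorem stmt3 (m : ℕ) (hm : 2 ≤ m) (p₁ p₂ p₂' : ℝ)
    (hp₁ : 0 < p₁) (hp₂ : 0 < p₂) (hp₂' : 0 < p₂')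
    (H : ℝ) (hH : H = ∑ a ∈ Finset.Icc 1 m, (1 : ℝ) / a)
    (RM : ℝ)
    (hRM : RM = ∑ a ∈ Finset.Icc 1 m, (1 : ℝ) / m *
      (if p₁ ≤ 1 / (a : ℝ) then (if p₂' ≤ 1 / (a : ℝ) then p₁ + p₂' else p₁)
       else (if p₂ ≤ 1 / (a : ℝ) then p₂ else 0))) :
    RM ≤ 4 / m ∧
    (∑ a ∈ Finset.Icc 1 m, (1 : ℝ) / m * (1 / (a : ℝ) + 1 / (a : ℝ))) = 2 * H / m ∧
    RM / (2 * H / m) ≤ 2 / H := by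
  have hm0 : (0 : ℝ) < m := by positivity
  have hHpos : 0 < H := by
    rw [hH]
    apply Finset.sum_pos
    · intro a ha
      simp only [Finset.mem_Icc] at ha
      have h0 : 0 < a := ha.1
      have : (0:ℝ) < a := by exact_mod_cast h0
      positivity
    · exact ⟨1, by simp; omega⟩
  -- bound on RM
  have hRMle : RM ≤ 4 / m := by
    rw [hRM]
    have hstep : ∀ a ∈ Finset.Icc 1 m,
        (1 : ℝ) / m *
        (if p₁ ≤ 1 / (a : ℝ) then (if p₂' ≤ 1 / (a : ℝ) then p₁ + p₂' else p₁)
         else (if p₂ ≤ 1 / (a : ℝ) then p₂ else 0)) ≤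
        (1 : ℝ) / m * ((if p₁ ≤ 1 / (a : ℝ) then p₁ else 0)
          + (if p₂' ≤ 1 / (a : ℝ) then p₂' else 0)
          + (if p₂ ≤ 1 / (a : ℝ) then p₂ else 0)) := by
      intro a _
      apply mul_le_mul_of_nonneg_left _ (by positivity)
      split_ifs <;> simp <;> positivity
    calc _ ≤ ∑ a ∈ Finset.Icc 1 m, (1 : ℝ) / m *
          ((if p₁ ≤ 1 / (a : ℝ) then p₁ else 0)
          + (if p₂' ≤ 1 / (a : ℝ) then p₂' else 0)
          + (if p₂ ≤ 1 / (a : ℝ) then p₂ else 0)) := Finset.sum_le_sum hstep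
      _ = (1 : ℝ) / m * ((∑ a ∈ Finset.Icc 1 m, (if p₁ ≤ 1 / (a : ℝ) then p₁ else 0))
          + (∑ a ∈ Finset.Icc 1 m, (if p₂' ≤ 1 / (a : ℝ) then p₂' else 0))
          + (∑ a ∈ Finset.Icc 1 m, (if p₂ ≤ 1 / (a : ℝ) then p₂ else 0))) := by
          rw [← Finset.mul_sum, Finset.sum_add_distrib, Finset.sum_add_distrib]
      _ ≤ (1 : ℝ) / m * (1 + 1 + 1) := by
          apply mul_le_mul_of_nonneg_left _ (by positivity)
          have h1 := price_sum_le_one m p₁ hp₁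
          have h2 := price_sum_le_one m p₂' hp₂'
          have h3 := price_sum_le_one m p₂ hp₂
          linarith
      _ = 3 / m := by ring
      _ ≤ 4 / m := by gcongr; norm_num
  have heq : (∑ a ∈ Finset.Icc 1 m, (1 : ℝ) / m * (1 / (a : ℝ) + 1 / (a : ℝ))) = 2 * H / m := by
    rw [hH, Finset.mul_sum, Finset.sum_div]
    apply Finset.sum_congr rfl
    intro a _
    field_simp
    ring
  refine ⟨hRMle, heq, ?_⟩
  have hd : 0 < 2 * H / m := by positivity
  calc RM / (2 * H / m) ≤ (4 / m) / (2 * H / m) := by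
        gcongr
    _ = 2 / H := by field_simp; ring
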